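/- arXiv:1206.5120 — 4 statements merged into one kernel-verified Lean document; each statement's English description precedes it below -/
import Mathlib

section
/- Let G be a cycle graph and L a finite set of ordered pairs of distinct vertices (OD-pairs). For a subset J ⊆ L, let A_J^+ be the set of positive arcs belonging to the positive route of every pair in J and to no positive route of a pair outside J, and define A_J^- analogously for negative arcs. Then for every J ⊆ L, A_J^+ is nonempty if and only if A_{L\J}^- is nonempty. -/
/-!
The positive and negative routes of an OD-pair `(o, d)` with `o ≠ d` split the edges of the
cycle between them: the negative arc at an edge lies on the negative route exactly when the
positive arc at the same edge is off the positive route. Hence an edge whose positive arc is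
used by exactly the pairs in `J` has its negative arc used by exactly the pairs in `L \ J`, and
conversely.
-/

open scoped Classical
open MeasureTheory

/-- The positive (counterclockwise) route of the OD-pair `(o, d)` on the cycle with
vertex set `ZMod n` contains the positive arc at edge `v` (the arc from `v` to `v + 1`)
iff `posRoute n o d v` holds. -/
def posRoute (n : ℕ) (o d v : ZMod n) : Prop := (v - o).val < (d - o).val

/-- The negative (clockwise) route of `(o, d)` contains the negative arc at edge `v`
(the arc from `v + 1` to `v`) iff `negRoute n o d v` holds. -/
def negRoute (n : ℕ) (o d v : ZMod n) : Prop := (v - d).val < (o - d).val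

/-- An arc of the directed version of the cycle is a pair `(v, b)`: for `b = true` the
positive arc `v → v + 1`, for `b = false` the negative arc `v + 1 → v`.
`inRoute n o d b a` says that arc `a` lies on the route of direction `b` of the
OD-pair `(o, d)`. -/
def inRoute (n : ℕ) (o d : ZMod n) (b : Bool) (a : ZMod n × Bool) : Prop :=
  a.2 = b ∧ (if b then posRoute n o d a.1 else negRoute n o d a.1)

theorem ZMod.val_sub_lt_val_neg_iff {n : ℕ} [NeZero n] {x k : ZMod n} (hk : k ≠ 0) :
    (x - k).val < (-k).val ↔ k.val ≤ x.val := by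
  have : NeZero k := ⟨hk⟩
  have hk_lt : k.val < n := ZMod.val_lt k
  rw [ZMod.val_neg_of_ne_zero]
  rcases le_or_gt k.val x.val with hkx | hxk
  · have hx_lt : x.val < n := ZMod.val_lt x
    rw [ZMod.val_sub hkx]
    omega
  · have : NeZero (k - x) := ⟨fun h => hxk.ne' (by rw [sub_eq_zero.mp h])⟩
    rw [← neg_sub, ZMod.val_neg_of_ne_zero, ZMod.val_sub hxk.le]
    omega

theorem negRoute_iff_not_posRoute {n : ℕ} [NeZero n] {o d : ZMod n} (hod : o ≠ d)
    (v : ZMod n) : negRoute n o d v ↔ ¬posRoute n o d v := by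
  have hv : v - d = (v - o) - (d - o) := by ring
  have ho : o - d = -(d - o) := by ring
  rw [negRoute, posRoute, hv, ho, ZMod.val_sub_lt_val_neg_iff (sub_ne_zero.mpr hod.symm),
    not_lt]

theorem AJplus_nonempty_iff_Acompl_minus_nonempty_general (n : ℕ) (hn : 3 ≤ n)
    (L : Finset (ZMod n × ZMod n)) (hL : ∀ ℓ ∈ L, ℓ.1 ≠ ℓ.2)
    (J : Finset (ZMod n × ZMod n)) :
    (∃ v : ZMod n, ∀ ℓ ∈ L, (posRoute n ℓ.1 ℓ.2 v ↔ ℓ ∈ J)) ↔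
      (∃ v : ZMod n, ∀ ℓ ∈ L, (negRoute n ℓ.1 ℓ.2 v ↔ ℓ ∈ L \ J)) := by
  have : NeZero n := ⟨by omega⟩
  refine exists_congr fun v => forall₂_congr fun ℓ hℓ => ?_
  rw [negRoute_iff_not_posRoute (hL ℓ hℓ), Finset.mem_sdiff, and_iff_right hℓ, not_iff_not]

/-- For a cycle graph with OD-pairs `L` and `J ⊆ L`, the set `A_J^+`
of positive arcs lying on the positive route of exactly the pairs in `J` is nonempty
iff the set `A_{L\J}^-` of negative arcs lying on the negative route of exactly the
pairs in `L \ J` is nonempty. -/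
theorem AJplus_nonempty_iff_Acompl_minus_nonempty (n : ℕ) (hn : 3 ≤ n)
    (L : Finset (ZMod n × ZMod n)) (hL : ∀ ℓ ∈ L, ℓ.1 ≠ ℓ.2)
    (J : Finset (ZMod n × ZMod n)) (hJ : J ⊆ L) :
    (∃ v : ZMod n, ∀ ℓ ∈ L, (posRoute n ℓ.1 ℓ.2 v ↔ ℓ ∈ J)) ↔
      (∃ v : ZMod n, ∀ ℓ ∈ L, (negRoute n ℓ.1 ℓ.2 v ↔ ℓ ∈ L \ J)) :=
  AJplus_nonempty_iff_Acompl_minus_nonempty_general n hn L hL J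
end

section
/- Let G be a cycle graph and L a set of OD-pairs with no two pairs equal (the demand digraph is simple). For any two distinct pairs ℓ, ℓ' ∈ L, there exists J ⊆ L with |{ℓ,ℓ'} ∩ J| = 1 such that A_J = A_J^+ ∪ A_J^- is nonempty; equivalently, some arc of G lies in exactly one of the four routes associated with ℓ and ℓ'. -/
open scoped Classical
open MeasureTheory

/-! A positive route determines its OD-pair: `o` is the only vertex whose outgoing positive arc
lies on the route while the preceding arc does not, and `d` the only vertex with the opposite
pattern. Hence the positive routes of `ℓ ≠ ℓ'` differ at some arc `v`, and the pairs whose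
positive route contains `v` form the required `J`. -/

theorem ZMod.val_sub_one_eq_ite {n : ℕ} [NeZero n] (x : ZMod n) :
    (x - 1).val = if x = 0 then n - 1 else x.val - 1 := by
  obtain ⟨m, rfl⟩ := Nat.exists_eq_succ_of_ne_zero (NeZero.ne n)
  split_ifs with hx
  · simp [hx]
  · exact Fin.val_sub_one_of_ne_zero hx

section Routes

variable {n : ℕ} [NeZero n] {o d v : ZMod n}

theorem posRoute_sub_one_iff :
    posRoute n o d (v - 1) ↔ (if v = o then n - 1 else (v - o).val - 1) < (d - o).val := by
  simp only [posRoute, sub_right_comm, ZMod.val_sub_one_eq_ite, sub_eq_zero]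

theorem posRoute_and_not_posRoute_sub_one_iff (h : o ≠ d) :
    posRoute n o d v ∧ ¬ posRoute n o d (v - 1) ↔ v = o := by
  have hlt := ZMod.val_lt (d - o)
  have hpos := ZMod.val_pos.2 (sub_ne_zero.2 h.symm)
  rw [posRoute_sub_one_iff, posRoute]
  split_ifs with hv
  · simp only [hv, sub_self, ZMod.val_zero, hpos, true_and, iff_true, not_lt]
    omega
  · have := ZMod.val_pos.2 (sub_ne_zero.2 hv)
    simp only [hv, iff_false]
    omega

theorem posRoute_sub_one_and_not_posRoute_iff (h : o ≠ d) :
    posRoute n o d (v - 1) ∧ ¬ posRoute n o d v ↔ v = d := by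
  have hpos := ZMod.val_pos.2 (sub_ne_zero.2 h.symm)
  rw [posRoute_sub_one_iff, posRoute]
  split_ifs with hv
  · simpa [hv, hpos] using h
  · have := ZMod.val_pos.2 (sub_ne_zero.2 hv)
    rw [← sub_left_inj (a := o), ← (ZMod.val_injective n).eq_iff]
    omega

theorem posRoute_injective {o' d' : ZMod n} (h : o ≠ d) (h' : o' ≠ d')
    (heq : posRoute n o d = posRoute n o' d') : (o, d) = (o', d') := by
  have start : ∀ v, v = o ↔ v = o' := fun v => by
    rw [← posRoute_and_not_posRoute_sub_one_iff h, ← posRoute_and_not_posRoute_sub_one_iff h', heq]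
  have finish : ∀ v, v = d ↔ v = d' := fun v => by
    rw [← posRoute_sub_one_and_not_posRoute_iff h, ← posRoute_sub_one_and_not_posRoute_iff h', heq]
  rw [(start o).1 rfl, (finish d).1 rfl]

end Routes

theorem Finset.card_pair_inter_filter_eq_one {α : Type*} [DecidableEq α] {s : Finset α}
    {p : α → Prop} [DecidablePred p] {a b : α} (ha : a ∈ s) (hb : b ∈ s)
    (h : ¬ (p a ↔ p b)) : ({a, b} ∩ s.filter p).card = 1 := by
  rw [inter_filter, inter_eq_left.2 (insert_subset ha (singleton_subset_iff.2 hb)),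
    filter_insert, filter_singleton]
  by_cases hpa : p a <;> simp_all

/-- For any two distinct OD-pairs `ℓ, ℓ'` of the simple demand digraph
on a cycle, there is a `J ⊆ L` containing exactly one of `ℓ, ℓ'` such that
`A_J = A_J^+ ∪ A_J^-` is nonempty, i.e. some arc lies on the routes (in its own
direction) of exactly the pairs in `J`. -/
theorem exists_separating_J (n : ℕ) (hn : 3 ≤ n)
    (L : Finset (ZMod n × ZMod n)) (hL : ∀ ℓ ∈ L, ℓ.1 ≠ ℓ.2)
    (ℓ ℓ' : ZMod n × ZMod n) (hℓ : ℓ ∈ L) (hℓ' : ℓ' ∈ L) (hne : ℓ ≠ ℓ') :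
    ∃ J ⊆ L, ({ℓ, ℓ'} ∩ J : Finset (ZMod n × ZMod n)).card = 1 ∧
      ∃ a : ZMod n × Bool, ∀ ℓ'' ∈ L, (inRoute n ℓ''.1 ℓ''.2 a.2 a ↔ ℓ'' ∈ J) := by
  have : NeZero n := ⟨by omega⟩
  obtain ⟨v, hv⟩ : ∃ v, ¬ (posRoute n ℓ.1 ℓ.2 v ↔ posRoute n ℓ'.1 ℓ'.2 v) := by
    by_contra! hall
    exact hne (posRoute_injective (hL ℓ hℓ) (hL ℓ' hℓ') (funext fun v => propext (hall v)))
  refine ⟨L.filter (fun p => posRoute n p.1 p.2 v), Finset.filter_subset _ _,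
    Finset.card_pair_inter_filter_eq_one hℓ hℓ' hv, (v, true), fun p hp => ?_⟩
  simp [inRoute, hp]
end

section
/- Let G be a cycle and L a set of four OD-pairs such that every arc of the directed version of G is contained in at most two routes. Then every arc of G is contained in exactly two routes, and in the demand digraph H every vertex has indegree (as endpoint of OD-pairs) equal to its outdegree restricted appropriately; in particular H contains a directed circuit. -/
open scoped Classical
open MeasureTheory

/-!
On every edge of the cycle each OD-pair uses exactly one of the two arcs, so the loads of the two
arcs of an edge add up to `|L| = 4`; as both are at most `2`, both equal `2`. Flow conservation of
the positive routes at a vertex `v` gives `load(v - 1) + out(v) = load(v) + in(v)`, so the constant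
load forces indegree = outdegree in the demand digraph `H`. Then every OD-pair has a successor
pair starting at its head, and following successors in the finite loopless `H` until a pair
repeats produces a directed circuit.
-/

namespace ZMod

lemma val_sub_of_lt {n : ℕ} [NeZero n] {a b : ZMod n} (h : a.val < b.val) :
    (a - b).val = n + a.val - b.val := by
  have : NeZero (b - a) := ⟨fun hba => by rw [sub_eq_zero.mp hba] at h; exact lt_irrefl _ h⟩
  rw [← neg_sub, val_neg_of_ne_zero, val_sub h.le]
  have := val_lt b
  omega

end ZMod

section Routes

variable {n : ℕ}

@[simp]
lemma inRoute_true_iff {o d v : ZMod n} : inRoute n o d true (v, true) ↔ posRoute n o d v := by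
  simp [inRoute]

@[simp]
lemma inRoute_false_iff {o d v : ZMod n} : inRoute n o d false (v, false) ↔ negRoute n o d v := by
  simp [inRoute]

variable [NeZero n]

lemma posRoute_iff_not_negRoute {o d v : ZMod n} (h : o ≠ d) :
    posRoute n o d v ↔ ¬ negRoute n o d v := by
  have : NeZero (d - o) := ⟨sub_ne_zero.mpr h.symm⟩
  rw [posRoute, negRoute, show v - d = (v - o) - (d - o) by ring,
    show o - d = -(d - o) by ring, ZMod.val_neg_of_ne_zero]
  have := ZMod.val_lt (v - o)
  rcases lt_or_ge (v - o).val (d - o).val with hlt | hge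
  · rw [ZMod.val_sub_of_lt hlt]; omega
  · rw [ZMod.val_sub hge]; omega

/-- Conservation of the positive route of `(o, d)` at vertex `v`: it enters `v` through the
arc `v - 1 → v` or starts at `v`, iff it leaves `v` through `v → v + 1` or ends at `v`. -/
lemma posRoute_flow_conservation {o d v : ZMod n} (h : o ≠ d) :
    (if posRoute n o d (v - 1) then 1 else 0) + (if o = v then 1 else 0) =
      (if posRoute n o d v then 1 else 0) + (if d = v then 1 else 0) := by
  have : Nontrivial (ZMod n) := ⟨⟨o, d, h⟩⟩
  have hone : (1 : ZMod n).val = 1 := ZMod.val_one'' (ZMod.nontrivial_iff.mp ‹_›)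
  have hpred : (v - o).val = 0 ∧ (v - 1 - o).val = n - 1 ∨
      (v - o).val ≠ 0 ∧ (v - 1 - o).val = (v - o).val - 1 := by
    rw [show v - 1 - o = (v - o) - 1 by ring]
    by_cases hvo : (v - o).val = 0
    · rw [(ZMod.val_eq_zero _).mp hvo, zero_sub, ZMod.val_neg_of_ne_zero, hone]
      exact .inl ⟨ZMod.val_zero, rfl⟩
    · rw [ZMod.val_sub (a := v - o) (b := 1) (by omega), hone]
      exact .inr ⟨hvo, rfl⟩
  have hov : o = v ↔ (v - o).val = 0 := by rw [ZMod.val_eq_zero, sub_eq_zero, eq_comm]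
  have hdv : d = v ↔ (d - o).val = (v - o).val := by
    rw [(ZMod.val_injective n).eq_iff, sub_left_inj]
  have hd := ZMod.val_lt (d - o)
  have hd0 := (ZMod.val_pos).mpr (sub_ne_zero.mpr h.symm)
  split_ifs <;> simp only [posRoute, hov, hdv] at * <;> omega

variable (L : Finset (ZMod n × ZMod n)) (hL : ∀ ℓ ∈ L, ℓ.1 ≠ ℓ.2)
include hL

lemma card_filter_posRoute_add_card_filter_negRoute (v : ZMod n) :
    (L.filter fun ℓ => posRoute n ℓ.1 ℓ.2 v).card +
      (L.filter fun ℓ => negRoute n ℓ.1 ℓ.2 v).card = L.card := by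
  rw [← Finset.card_filter_add_card_filter_not (s := L) (fun ℓ => posRoute n ℓ.1 ℓ.2 v),
    Finset.filter_congr fun ℓ hℓ => (posRoute_iff_not_negRoute (hL ℓ hℓ)).not_left.symm]

lemma card_filter_posRoute_sub_one_add_card_filter_fst_eq (v : ZMod n) :
    (L.filter fun ℓ => posRoute n ℓ.1 ℓ.2 (v - 1)).card + (L.filter fun ℓ => ℓ.1 = v).card =
      (L.filter fun ℓ => posRoute n ℓ.1 ℓ.2 v).card + (L.filter fun ℓ => ℓ.2 = v).card := by
  simp only [Finset.card_filter, ← Finset.sum_add_distrib]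
  exact Finset.sum_congr rfl fun ℓ hℓ => posRoute_flow_conservation (hL ℓ hℓ)

end Routes

namespace Function

lemma exists_mem_periodicPts {α : Type*} [Finite α] [Nonempty α] (f : α → α) :
    ∃ x, x ∈ periodicPts f := by
  obtain ⟨x⟩ := ‹Nonempty α›
  obtain ⟨i, j, hne, heq⟩ := Finite.exists_ne_map_eq_of_infinite (f^[·] x)
  wlog hij : i < j generalizing i j
  · exact this j i hne.symm heq.symm (by omega)
  refine ⟨f^[i] x, mk_mem_periodicPts (n := j - i) (by omega) ?_⟩
  change f^[j - i] (f^[i] x) = f^[i] x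
  rw [← iterate_add_apply, Nat.sub_add_cancel hij.le]
  exact heq.symm

lemma exists_injective_zmod_orbit {α : Type*} [Finite α] [Nonempty α] (f : α → α)
    (hf : ∀ x, f x ≠ x) :
    ∃ m, 2 ≤ m ∧ ∃ g : ZMod m → α, Injective g ∧ ∀ k, f (g k) = g (k + 1) := by
  obtain ⟨y, hy⟩ := exists_mem_periodicPts f
  set m := minimalPeriod f y
  have hm0 : 0 < m := minimalPeriod_pos_of_mem_periodicPts hy
  have hm1 : m ≠ 1 := fun h => hf y (minimalPeriod_eq_one_iff_isFixedPt.mp h)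
  have : NeZero m := ⟨hm0.ne'⟩
  refine ⟨m, by omega, fun k => f^[k.val] y, fun k k' hkk' => ?_, fun k => ?_⟩
  · exact ZMod.val_injective m
      (iterate_injOn_Iio_minimalPeriod (ZMod.val_lt k) (ZMod.val_lt k') hkk')
  · change f (f^[k.val] y) = f^[(k + 1).val] y
    rw [ZMod.val_add, ZMod.val_one_eq_one_mod, Nat.add_mod_mod, iterate_mod_minimalPeriod_eq,
      iterate_succ_apply']

end Function

lemma Finset.exists_directed_circuit {β : Type*} (L : Finset (β × β)) (hne : L.Nonempty)
    (hL : ∀ ℓ ∈ L, ℓ.1 ≠ ℓ.2) (hsucc : ∀ ℓ ∈ L, ∃ ℓ' ∈ L, ℓ'.1 = ℓ.2) :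
    ∃ m, 2 ≤ m ∧ ∃ f : ZMod m → β × β,
      Function.Injective f ∧ (∀ k, f k ∈ L) ∧ ∀ k, (f k).2 = (f (k + 1)).1 := by
  choose next hnext_mem hnext using hsucc
  have : Nonempty L := hne.to_subtype
  obtain ⟨m, hm, f, hf, hstep⟩ := Function.exists_injective_zmod_orbit
    (fun ℓ : L => (⟨next ℓ ℓ.2, hnext_mem ℓ ℓ.2⟩ : L))
    (fun ℓ h => hL ℓ ℓ.2 ((congrArg (fun ℓ' : L => ℓ'.1.1) h).symm.trans (hnext ℓ ℓ.2)))
  refine ⟨m, hm, fun k => (f k).1, Subtype.val_injective.comp hf, fun k => (f k).2, fun k => ?_⟩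
  simp only [← hstep, hnext]

lemma Finset.exists_fst_eq_snd_of_balanced {β : Type*} [DecidableEq β] (L : Finset (β × β))
    (hbal : ∀ v, (L.filter fun ℓ => ℓ.2 = v).card = (L.filter fun ℓ => ℓ.1 = v).card) :
    ∀ ℓ ∈ L, ∃ ℓ' ∈ L, ℓ'.1 = ℓ.2 := by
  intro ℓ hℓ
  have hin : (L.filter fun ℓ' => ℓ'.2 = ℓ.2).Nonempty := ⟨ℓ, Finset.mem_filter.mpr ⟨hℓ, rfl⟩⟩
  rw [← Finset.card_pos, hbal, Finset.card_pos] at hin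
  obtain ⟨ℓ', hℓ'⟩ := hin
  exact ⟨ℓ', (Finset.mem_filter.mp hℓ').1, (Finset.mem_filter.mp hℓ').2⟩

/-- If `|L| = 4` and each arc of the cycle is contained in at most
two routes, then every arc is contained in exactly two routes, every vertex of the
demand digraph has indegree equal to outdegree, and in particular the demand digraph
contains a directed circuit (a cyclic sequence of distinct OD-pairs in which the head
of each pair is the tail of the next). -/
theorem four_pairs_structure (n : ℕ) (hn : 3 ≤ n)
    (L : Finset (ZMod n × ZMod n)) (hL : ∀ ℓ ∈ L, ℓ.1 ≠ ℓ.2)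
    (hcard : L.card = 4)
    (h2 : ∀ a : ZMod n × Bool, (L.filter (fun ℓ => inRoute n ℓ.1 ℓ.2 a.2 a)).card ≤ 2) :
    (∀ a : ZMod n × Bool, (L.filter (fun ℓ => inRoute n ℓ.1 ℓ.2 a.2 a)).card = 2) ∧
    (∀ v : ZMod n,
      (L.filter (fun ℓ => ℓ.2 = v)).card = (L.filter (fun ℓ => ℓ.1 = v)).card) ∧
    ∃ (m : ℕ), 2 ≤ m ∧ ∃ f : ZMod m → ZMod n × ZMod n,
      Function.Injective f ∧ (∀ k, f k ∈ L) ∧ ∀ k, (f k).2 = (f (k + 1)).1 := by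
  have : NeZero n := ⟨by omega⟩
  have hload : ∀ a : ZMod n × Bool,
      (L.filter (fun ℓ => inRoute n ℓ.1 ℓ.2 a.2 a)).card = 2 := by
    rintro ⟨v, b⟩
    have hsum := card_filter_posRoute_add_card_filter_negRoute L hL v
    have hpos := h2 (v, true)
    have hneg := h2 (v, false)
    cases b <;> simp only [inRoute_true_iff, inRoute_false_iff] at hpos hneg ⊢ <;> omega
  have hpos : ∀ v, (L.filter fun ℓ => posRoute n ℓ.1 ℓ.2 v).card = 2 := fun v => by
    simpa only [inRoute_true_iff] using hload (v, true)
  have hbal : ∀ v : ZMod n,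
      (L.filter (fun ℓ => ℓ.2 = v)).card = (L.filter (fun ℓ => ℓ.1 = v)).card := fun v => by
    have := card_filter_posRoute_sub_one_add_card_filter_fst_eq L hL v
    rw [hpos, hpos] at this
    omega
  exact ⟨hload, hbal, L.exists_directed_circuit (Finset.card_pos.mp (by omega)) hL
    (L.exists_fst_eq_snd_of_balanced hbal)⟩
end

section
/- The 1-sum operation preserves the strong uniqueness property: if graphs G and G' each have the strong uniqueness property and share exactly one vertex, then the graph G'' obtained as their union (gluing at that vertex) has the strong uniqueness property. -/
open scoped Classical
open MeasureTheory

/-- The cost of a walk `p` for a user with arc cost functions `c`, given arc flows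
`f`: the sum over the darts (directed edges) of `p` of the arc cost at the flow. -/
noncomputable def walkCost {V : Type} {G : SimpleGraph V}
    (c : V × V → ℝ → ℝ) (f : V × V → ℝ) {u v : V} (p : G.Walk u v) : ℝ :=
  (p.darts.map (fun d => c d.toProd (f d.toProd))).sum

/-- The flow on the arc `a` induced by a strategy profile `σ` assigning to each user
a walk from their origin to their destination. -/
noncomputable def walkFlow {V I : Type} [MeasurableSpace I] (μ : Measure I)
    {G : SimpleGraph V} (od : I → V × V)
    (σ : (i : I) → G.Walk (od i).1 (od i).2) (a : V × V) : ℝ :=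
  (μ {i | a ∈ (σ i).darts.map SimpleGraph.Dart.toProd}).toReal

/-- `σ` is a Nash equilibrium: every user's chosen route has minimal cost, given the
induced flows, among all routes (paths) from the user's origin to their destination. -/
def IsWalkEquilibrium {V I : Type} [MeasurableSpace I] (μ : Measure I)
    {G : SimpleGraph V} (od : I → V × V) (c : I → V × V → ℝ → ℝ)
    (σ : (i : I) → G.Walk (od i).1 (od i).2) : Prop :=
  ∀ (i : I) (p : G.Walk (od i).1 (od i).2), p.IsPath →
    walkCost (c i) (walkFlow μ od σ) (σ i) ≤ walkCost (c i) (walkFlow μ od σ) p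

/-- The graph `G` together with the demand digraph consisting of the OD-pairs in `Hd`
has the uniqueness property: for every nonatomic population with OD-pairs in `Hd` and
every assignment of strictly increasing continuous nonnegative user-specific cost
functions, all Nash equilibria induce the same arc flows. -/
def GraphUniquenessProperty {V : Type} (G : SimpleGraph V) (Hd : Set (V × V)) : Prop :=
  ∀ (I : Type) (m : MeasurableSpace I) (μ : @Measure I m),
    @IsFiniteMeasure I m μ →
    ∀ od : I → V × V, (∀ i, od i ∈ Hd) →
    ∀ c : I → V × V → ℝ → ℝ,
      (∀ i a, StrictMono (c i a)) → (∀ i a, Continuous (c i a)) →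
      (∀ i a x, 0 ≤ c i a x) →
    ∀ σ σ' : (i : I) → G.Walk (od i).1 (od i).2,
      (∀ i, (σ i).IsPath) → (∀ i, (σ' i).IsPath) →
      (∀ a : V × V,
        @MeasurableSet I m {i | a ∈ (σ i).darts.map SimpleGraph.Dart.toProd}) →
      (∀ a : V × V,
        @MeasurableSet I m {i | a ∈ (σ' i).darts.map SimpleGraph.Dart.toProd}) →
      @IsWalkEquilibrium V I m μ G od c σ → @IsWalkEquilibrium V I m μ G od c σ' →
      ∀ a : V × V, @walkFlow V I m μ G od σ a = @walkFlow V I m μ G od σ' a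

/-- `G` has the strong uniqueness property: the uniqueness property holds for every
simple demand digraph on its vertices, i.e. for every choice of OD-pairs of distinct
vertices. -/
def StrongUniquenessProperty {V : Type} (G : SimpleGraph V) : Prop :=
  ∀ Hd : Set (V × V), (∀ ℓ ∈ Hd, ℓ.1 ≠ ℓ.2) → GraphUniquenessProperty G Hd

/-!
A path of `G ⊔ G'` meets `G` in a single segment, running between the retractions of its
endpoints onto the vertex set `S` of `G` (an endpoint outside `S` retracts to the cut vertex `v₀`).
Replacing every user by a user of `G` travelling along that segment turns an equilibrium of
`G ⊔ G'` into an equilibrium of `G` with the same flows on the arcs of `G`; the users whose paths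
avoid `G` get null mass and a cost under which one fixed arc of `G` is always a best route.
The strong uniqueness property of `G` then fixes the flows on the arcs of `G`, and symmetrically
on those of `G'`.
-/

open SimpleGraph MeasureTheory

section Routes

variable {V : Type} {G H : SimpleGraph V} {u v w : V}

lemma walkCost_eq_sum (c : V × V → ℝ → ℝ) (f : V × V → ℝ) (p : G.Walk u v) :
    walkCost c f p = ((p.darts.map Dart.toProd).map fun b => c b (f b)).sum := by
  rw [walkCost, List.map_map]; rfl

@[simp]
lemma map_toProd_darts_mapLe (h : G ≤ H) (p : G.Walk u v) :
    (p.mapLe h).darts.map Dart.toProd = p.darts.map Dart.toProd := by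
  simp [Walk.darts_map, Function.comp_def]

lemma walkCost_mapLe (h : G ≤ H) (c : V × V → ℝ → ℝ) (f : V × V → ℝ) (p : G.Walk u v) :
    walkCost c f (p.mapLe h) = walkCost c f p := by
  rw [walkCost_eq_sum, walkCost_eq_sum, map_toProd_darts_mapLe]

lemma walkCost_append (c : V × V → ℝ → ℝ) (f : V × V → ℝ) (p : G.Walk u v) (q : G.Walk v w) :
    walkCost c f (p.append q) = walkCost c f p + walkCost c f q := by
  simp [walkCost, Walk.darts_append]

lemma walkCost_bypass_le {c : V × V → ℝ → ℝ} (hc : ∀ b x, 0 ≤ c b x) (f : V × V → ℝ)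
    (p : G.Walk u v) : walkCost c f p.bypass ≤ walkCost c f p :=
  (p.darts_bypass_sublist_darts.map _).sum_le_sum (by simp [hc])

lemma adj_of_mem_map_toProd_darts {p : G.Walk u v} {b : V × V}
    (hb : b ∈ p.darts.map Dart.toProd) : G.Adj b.1 b.2 := by
  obtain ⟨d, -, rfl⟩ := List.mem_map.1 hb
  exact d.adj

lemma walkCost_congr_flow (c : V × V → ℝ → ℝ) {f g : V × V → ℝ}
    (hfg : ∀ b, G.Adj b.1 b.2 → f b = g b) (p : G.Walk u v) :
    walkCost c f p = walkCost c g p := by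
  rw [walkCost_eq_sum, walkCost_eq_sum]
  exact congrArg List.sum <| List.map_congr_left fun b hb => by
    rw [hfg b (adj_of_mem_map_toProd_darts hb)]

lemma walkFlow_eq_zero_of_not_adj {I : Type} [MeasurableSpace I] (μ : Measure I) (od : I → V × V)
    (σ : (i : I) → G.Walk (od i).1 (od i).2) {a : V × V} (ha : ¬ G.Adj a.1 a.2) :
    walkFlow μ od σ a = 0 := by
  have : {i | a ∈ (σ i).darts.map Dart.toProd} = ∅ :=
    Set.eq_empty_of_forall_notMem fun _ hi => ha (adj_of_mem_map_toProd_darts hi)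
  rw [walkFlow, this, measure_empty, ENNReal.toReal_zero]

def IsBestRoute (c : V × V → ℝ → ℝ) (f : V × V → ℝ) (p : G.Walk u v) : Prop :=
  ∀ q : G.Walk u v, q.IsPath → walkCost c f p ≤ walkCost c f q

lemma IsBestRoute.congr_flow {c : V × V → ℝ → ℝ} {f g : V × V → ℝ}
    (hfg : ∀ b, G.Adj b.1 b.2 → f b = g b) {p : G.Walk u v} (hp : IsBestRoute c f p) :
    IsBestRoute c g p := fun q hq => by
  simpa only [walkCost_congr_flow c hfg] using hp q hq

lemma isBestRoute_cons_nil {c : V × V → ℝ → ℝ} (hc : ∀ b x, 1 ≤ c b x ∧ c b x ≤ 2)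
    (f : V × V → ℝ) (h : G.Adj u v) : IsBestRoute c f (Walk.cons h Walk.nil) := by
  intro q _
  cases q with
  | nil => exact absurd rfl h.ne
  | @cons _ x _ _ q =>
    cases q with
    | nil => simp [walkCost]
    | @cons _ y _ _ q =>
      have hq : 0 ≤ walkCost c f q :=
        List.sum_nonneg (by simpa [walkCost] using fun d _ => zero_le_one.trans (hc _ _).1)
      have := (hc (u, v) (f (u, v))).2
      have := (hc (u, x) (f (u, x))).1
      have := (hc (x, y) (f (x, y))).1
      simp only [walkCost, Walk.darts_cons, Walk.darts_nil, List.map_cons, List.map_nil,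
        List.sum_cons, List.sum_nil] at hq ⊢
      linarith

end Routes

/-- `D` need not be measurable, so the measure discarding it is the Carathéodory extension of
`X ↦ μ (X \ D)`. -/
lemma MeasureTheory.Measure.exists_extension_sdiff {I : Type} {m : MeasurableSpace I}
    (μ : Measure I) [IsFiniteMeasure μ] (D : Set I) :
    ∃ (m' : MeasurableSpace I) (ν : Measure[m'] I), m ≤ m' ∧ MeasurableSet[m'] D ∧
      IsFiniteMeasure ν ∧ ∀ X, MeasurableSet[m'] X → ν X = μ (X \ D) := by
  set ρ := OuterMeasure.restrict Dᶜ μ.toOuterMeasure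
  have hρ (X : Set I) : ρ X = μ (X \ D) := by
    simp [ρ, OuterMeasure.restrict_apply, Set.sdiff_eq]
  have hm : m ≤ ρ.caratheodory := fun A hA => by
    refine (OuterMeasure.isCaratheodory_iff ρ).2 fun t => ?_
    rw [hρ, hρ, hρ, ← measure_inter_add_sdiff (t \ D) hA, Set.sdiff_inter_right_comm,
      sdiff_sdiff_comm]
  refine ⟨ρ.caratheodory, @OuterMeasure.toMeasure I ρ.caratheodory ρ le_rfl, hm, ?_, ⟨?_⟩,
    fun X hX => ?_⟩
  · refine (OuterMeasure.isCaratheodory_iff_le ρ).2 fun t => ?_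
    simp [hρ, Set.inter_sdiff_assoc]
  · rw [@toMeasure_apply I ρ.caratheodory _ _ _ MeasurableSet.univ, hρ]
    exact measure_lt_top μ _
  · rw [@toMeasure_apply I ρ.caratheodory _ _ _ hX, hρ]

section RestrictedGame

variable {V : Type}

/-- The vertex at which a route from `x` enters the side `S` of a 1-sum glued at `v₀`. -/
noncomputable def retract (S : Set V) (v₀ x : V) : V := if x ∈ S then x else v₀

lemma retract_of_mem {S : Set V} {x : V} (v₀ : V) (hx : x ∈ S) : retract S v₀ x = x := if_pos hx

lemma retract_of_notMem {S : Set V} {x : V} (v₀ : V) (hx : x ∉ S) : retract S v₀ x = v₀ :=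
  if_neg hx

/-- Every arc costs between `1` and `2` under `dummyCost`, so a single arc is a best route
for it whatever the flows. -/
noncomputable def dummyCost (x : ℝ) : ℝ := 1 + Real.sigmoid x

/-- Users whose routes do not use `G` become users travelling along the arc `a`. -/
noncomputable def restrictPair (S : Set V) (v₀ : V) (a ℓ : V × V) : V × V :=
  if retract S v₀ ℓ.1 = retract S v₀ ℓ.2 then a else (retract S v₀ ℓ.1, retract S v₀ ℓ.2)

noncomputable def restrictCost (S : Set V) (v₀ : V) (ℓ : V × V) (c : V × V → ℝ → ℝ) :
    V × V → ℝ → ℝ :=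
  if retract S v₀ ℓ.1 = retract S v₀ ℓ.2 then fun _ => dummyCost else c

variable {S : Set V} {v₀ : V} {ℓ : V × V} {c : V × V → ℝ → ℝ}

lemma restrictPair_fst_ne_snd {G : SimpleGraph V} {a : V × V} (ha : G.Adj a.1 a.2) (ℓ : V × V) :
    (restrictPair S v₀ a ℓ).1 ≠ (restrictPair S v₀ a ℓ).2 := by
  unfold restrictPair
  split_ifs with hℓ
  exacts [ha.ne, hℓ]

lemma strictMono_restrictCost {b : V × V} (hc : StrictMono (c b)) :
    StrictMono (restrictCost S v₀ ℓ c b) := by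
  unfold restrictCost
  split_ifs
  exacts [fun _ _ hxy => add_lt_add_right (Real.sigmoid_strictMono hxy) 1, hc]

lemma continuous_restrictCost {b : V × V} (hc : Continuous (c b)) :
    Continuous (restrictCost S v₀ ℓ c b) := by
  unfold restrictCost
  split_ifs
  exacts [continuous_const.add continuous_sigmoid, hc]

lemma restrictCost_nonneg {b : V × V} {x : ℝ} (hc : 0 ≤ c b x) :
    0 ≤ restrictCost S v₀ ℓ c b x := by
  unfold restrictCost
  split_ifs
  exacts [add_nonneg zero_le_one (Real.sigmoid_nonneg x), hc]

end RestrictedGame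

structure IsOneSum {V : Type} (K G G' : SimpleGraph V) (S S' : Set V) (v₀ : V) : Prop where
  sup_eq : G ⊔ G' = K
  adj_left : ∀ {a b : V}, G.Adj a b → a ∈ S ∧ b ∈ S
  adj_right : ∀ {a b : V}, G'.Adj a b → a ∈ S' ∧ b ∈ S'
  inter_eq : S ∩ S' = {v₀}

namespace IsOneSum

variable {V : Type} {K G G' : SimpleGraph V} {S S' : Set V} {v₀ : V}
  (h : IsOneSum K G G' S S' v₀)
include h

lemma symm : IsOneSum K G' G S' S v₀ :=
  ⟨sup_comm G G' ▸ h.sup_eq, h.adj_right, h.adj_left, Set.inter_comm S S' ▸ h.inter_eq⟩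

lemma le_left : G ≤ K := h.sup_eq ▸ le_sup_left

lemma le_right : G' ≤ K := h.symm.le_left

lemma adj_iff {x y : V} : K.Adj x y ↔ G.Adj x y ∨ G'.Adj x y := by
  rw [← h.sup_eq, sup_adj]

lemma eq_of_mem {x : V} (hx : x ∈ S) (hx' : x ∈ S') : x = v₀ := by
  have hx₀ : x ∈ S ∩ S' := ⟨hx, hx'⟩
  rwa [h.inter_eq] at hx₀

lemma v₀_mem : v₀ ∈ S := (h.inter_eq.symm ▸ rfl : v₀ ∈ S ∩ S').1

lemma not_adj_right {x y : V} (hG : G.Adj x y) : ¬ G'.Adj x y := fun hG' =>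
  hG.ne <| (h.eq_of_mem (h.adj_left hG).1 (h.adj_right hG').1).trans
    (h.eq_of_mem (h.adj_left hG).2 (h.adj_right hG').2).symm

lemma mem_union_of_walk {x y : V} (p : K.Walk x y) (hxy : x ≠ y) : x ∈ S ∪ S' := by
  cases p with
  | nil => exact absurd rfl hxy
  | cons hK _ => exact (h.adj_iff.1 hK).imp (h.adj_left · |>.1) (h.adj_right · |>.1)

lemma v₀_mem_support {x y : V} (p : K.Walk x y) (hx : x ∈ S') (hy : y ∈ S) :
    v₀ ∈ p.support := by
  induction p with
  | nil => exact List.mem_singleton.2 (h.eq_of_mem hy hx).symm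
  | @cons x _ _ hK q ih =>
    by_cases hxS : x ∈ S
    · exact List.mem_cons.2 (Or.inl (h.eq_of_mem hxS hx).symm)
    · refine List.mem_cons_of_mem _ (ih ?_ hy)
      rcases h.adj_iff.1 hK with hG | hG'
      · exact absurd (h.adj_left hG).1 hxS
      · exact (h.adj_right hG').2

lemma exists_eq_mapLe_of_isPath {x y : V} {p : K.Walk x y} (hp : p.IsPath) (hx : x ∈ S)
    (hy : y ∈ S) : ∃ q : G.Walk x y, p = q.mapLe h.le_left := by
  induction p with
  | nil => exact ⟨Walk.nil, rfl⟩
  | @cons x z _ hK p ih =>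
    rw [Walk.cons_isPath_iff] at hp
    rcases h.adj_iff.1 hK with hG | hG'
    · obtain ⟨q, rfl⟩ := ih hp.1 (h.adj_left hG).2 hy
      exact ⟨Walk.cons hG q, rfl⟩
    · -- leaving `S` through `v₀`, the path would have to come back through `v₀`
      have hx₀ : x = v₀ := h.eq_of_mem hx (h.adj_right hG').1
      exact absurd (hx₀ ▸ h.v₀_mem_support p (h.adj_right hG').2 hy) hp.2

lemma exists_eq_append_of_isPath {x y : V} {p : K.Walk x y} (hp : p.IsPath) (hx : x ∈ S')
    (hy : y ∈ S) : ∃ (p₁ : G'.Walk x v₀) (q : G.Walk v₀ y),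
      p = (p₁.mapLe h.le_right).append (q.mapLe h.le_left) := by
  have hv₀ := h.v₀_mem_support p hx hy
  obtain ⟨p₁, hp₁⟩ :=
    h.symm.exists_eq_mapLe_of_isPath (hp.takeUntil hv₀) hx h.symm.v₀_mem
  obtain ⟨q, hq⟩ := h.exists_eq_mapLe_of_isPath (hp.dropUntil hv₀) h.v₀_mem hy
  exact ⟨p₁, q, by rw [← hp₁, ← hq, p.take_spec hv₀]⟩

lemma exists_eq_append_append_of_isPath {x y : V} {p : K.Walk x y} (hp : p.IsPath)
    (hxy : retract S v₀ x ≠ retract S v₀ y) :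
    ∃ (p₁ : G'.Walk x (retract S v₀ x)) (q : G.Walk (retract S v₀ x) (retract S v₀ y))
      (p₂ : G'.Walk (retract S v₀ y) y),
      p = (p₁.mapLe h.le_right).append ((q.mapLe h.le_left).append (p₂.mapLe h.le_right)) := by
  have hne : x ≠ y := fun e => hxy (e ▸ rfl)
  by_cases hx : x ∈ S <;> by_cases hy : y ∈ S
  · rw [retract_of_mem v₀ hx, retract_of_mem v₀ hy]
    obtain ⟨q, rfl⟩ := h.exists_eq_mapLe_of_isPath hp hx hy
    exact ⟨Walk.nil, q, Walk.nil, by simp⟩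
  · have hy' : y ∈ S' := (h.mem_union_of_walk p.reverse hne.symm).resolve_left hy
    rw [retract_of_mem v₀ hx, retract_of_notMem v₀ hy]
    obtain ⟨q, p₂, rfl⟩ := h.symm.exists_eq_append_of_isPath hp hx hy'
    exact ⟨Walk.nil, q, p₂, by simp⟩
  · have hx' : x ∈ S' := (h.mem_union_of_walk p hne).resolve_left hx
    rw [retract_of_notMem v₀ hx, retract_of_mem v₀ hy]
    obtain ⟨p₁, q, rfl⟩ := h.exists_eq_append_of_isPath hp hx' hy
    exact ⟨p₁, q, Walk.nil, by simp⟩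
  · rw [retract_of_notMem v₀ hx, retract_of_notMem v₀ hy] at hxy
    exact absurd rfl hxy

lemma mem_right_of_retract_eq {x y : V} (hx : x ∈ S ∪ S') (hxy : retract S v₀ x = retract S v₀ y)
    (hne : x ≠ y) : x ∈ S' := by
  unfold retract at hxy
  split_ifs at hxy with hxS hyS
  · exact absurd hxy hne
  · exact hxy ▸ h.symm.v₀_mem
  all_goals exact hx.resolve_left hxS

lemma not_adj_left_of_retract_eq {x y : V} {p : K.Walk x y} (hp : p.IsPath)
    (hxy : retract S v₀ x = retract S v₀ y) {b : V × V} (hb : b ∈ p.darts.map Dart.toProd) :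
    ¬ G.Adj b.1 b.2 := by
  by_cases hne : x = y
  · subst hne
    rw [Walk.eq_nil_iff_nil.2 (Walk.isPath_iff_nil.1 hp)] at hb
    simp at hb
  have hx := h.mem_right_of_retract_eq (h.mem_union_of_walk p hne) hxy hne
  have hy := h.mem_right_of_retract_eq (h.mem_union_of_walk p.reverse (Ne.symm hne)) hxy.symm
    (Ne.symm hne)
  obtain ⟨q, rfl⟩ := h.symm.exists_eq_mapLe_of_isPath hp hx hy
  rw [map_toProd_darts_mapLe] at hb
  exact fun hG => h.not_adj_right hG (adj_of_mem_map_toProd_darts hb)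

lemma exists_restrict_of_retract_ne {x y : V} {p : K.Walk x y} (hp : p.IsPath)
    (hxy : retract S v₀ x ≠ retract S v₀ y) :
    ∃ w : G.Walk (retract S v₀ x) (retract S v₀ y), w.IsPath ∧
      (∀ b, b ∈ w.darts.map Dart.toProd ↔ b ∈ p.darts.map Dart.toProd ∧ G.Adj b.1 b.2) ∧
      ∀ (c : V × V → ℝ → ℝ) (f : V × V → ℝ), (∀ b t, 0 ≤ c b t) →
        IsBestRoute c f p → IsBestRoute c f w := by
  obtain ⟨p₁, q, p₂, rfl⟩ := h.exists_eq_append_append_of_isPath hp hxy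
  refine ⟨q, hp.of_append_right.of_append_left.of_mapLe, fun b => ?_,
    fun c f hc hbest q' _ => ?_⟩
  · have hright {y z : V} (r : G'.Walk y z) (hb : b ∈ r.darts.map Dart.toProd) :
        ¬ G.Adj b.1 b.2 :=
      fun hG => h.not_adj_right hG (adj_of_mem_map_toProd_darts hb)
    simp only [Walk.darts_append, List.map_append, List.mem_append, map_toProd_darts_mapLe]
    constructor
    · exact fun hb => ⟨Or.inr (Or.inl hb), adj_of_mem_map_toProd_darts hb⟩
    · rintro ⟨hb | hb | hb, hG⟩
      exacts [absurd hG (hright p₁ hb), hb, absurd hG (hright p₂ hb)]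
  · -- splicing `q'` in for `q` gives a walk whose bypass competes with the route
    set W := (p₁.mapLe h.le_right).append ((q'.mapLe h.le_left).append (p₂.mapLe h.le_right))
    have := (hbest W.bypass W.bypass_isPath).trans (walkCost_bypass_le hc f W)
    simp only [W, walkCost_append, walkCost_mapLe] at this
    linarith

lemma exists_restrict {a : V × V} (ha : G.Adj a.1 a.2) {ℓ : V × V} {p : K.Walk ℓ.1 ℓ.2}
    (hp : p.IsPath) :
    ∃ w : G.Walk (restrictPair S v₀ a ℓ).1 (restrictPair S v₀ a ℓ).2, w.IsPath ∧
      (∀ b, b ∈ w.darts.map Dart.toProd ↔ b ∈ p.darts.map Dart.toProd ∧ G.Adj b.1 b.2 ∨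
        b = a ∧ retract S v₀ ℓ.1 = retract S v₀ ℓ.2) ∧
      ∀ (c : V × V → ℝ → ℝ) (f : V × V → ℝ), (∀ b t, 0 ≤ c b t) →
        IsBestRoute c f p → IsBestRoute (restrictCost S v₀ ℓ c) f w := by
  by_cases hℓ : retract S v₀ ℓ.1 = retract S v₀ ℓ.2
  · rw [restrictPair, if_pos hℓ]
    refine ⟨Walk.cons ha Walk.nil, by simp [ha.ne], fun b => ?_, fun c f _ _ => ?_⟩
    · have := fun hb => h.not_adj_left_of_retract_eq hp hℓ (b := b) hb
      simp only [Walk.darts_cons, Walk.darts_nil, List.map_cons, List.map_nil,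
        List.mem_singleton, hℓ, and_true]
      tauto
    · rw [restrictCost, if_pos hℓ]
      exact isBestRoute_cons_nil (fun _ x => ⟨le_add_of_nonneg_right (Real.sigmoid_nonneg x),
        by linarith [Real.sigmoid_le_one x]⟩) f ha
  · rw [restrictPair, if_neg hℓ]
    obtain ⟨w, hw, hwd, hwb⟩ := h.exists_restrict_of_retract_ne hp hℓ
    refine ⟨w, hw, by simp [hwd, hℓ], fun c f hc hbest => ?_⟩
    rw [restrictCost, if_neg hℓ]
    exact hwb c f hc hbest

lemma exists_restricted_equilibrium {a : V × V} (ha : G.Adj a.1 a.2) {I : Type}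
    {m m' : MeasurableSpace I} {μ : Measure[m] I} {ν : Measure[m'] I} (hmm' : m ≤ m')
    {od : I → V × V} (hD : MeasurableSet[m'] {i | retract S v₀ (od i).1 = retract S v₀ (od i).2})
    (hν : ∀ X, MeasurableSet[m'] X →
      ν X = μ (X \ {i | retract S v₀ (od i).1 = retract S v₀ (od i).2}))
    {c : I → V × V → ℝ → ℝ} (hc : ∀ i b x, 0 ≤ c i b x)
    {σ : (i : I) → K.Walk (od i).1 (od i).2} (hσ : ∀ i, (σ i).IsPath)
    (hσm : ∀ b, MeasurableSet[m] {i | b ∈ (σ i).darts.map Dart.toProd})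
    (he : @IsWalkEquilibrium V I m μ K od c σ) :
    ∃ w : (i : I) → G.Walk (restrictPair S v₀ a (od i)).1 (restrictPair S v₀ a (od i)).2,
      (∀ i, (w i).IsPath) ∧ (∀ b, MeasurableSet[m'] {i | b ∈ (w i).darts.map Dart.toProd}) ∧
      @IsWalkEquilibrium V I m' ν G (fun i => restrictPair S v₀ a (od i))
        (fun i => restrictCost S v₀ (od i) (c i)) w ∧
      ∀ b, G.Adj b.1 b.2 → @walkFlow V I m' ν G _ w b = @walkFlow V I m μ K od σ b := by
  set D := {i | retract S v₀ (od i).1 = retract S v₀ (od i).2}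
  choose w hw hwd hwb using fun i => h.exists_restrict ha (hσ i)
  have hsets (b : V × V) : {i | b ∈ (w i).darts.map Dart.toProd} =
      {i | b ∈ (σ i).darts.map Dart.toProd} ∩ {_i | G.Adj b.1 b.2} ∪ {_i | b = a} ∩ D := by
    ext i
    simp only [hwd, Set.mem_ofPred_eq, Set.mem_union, Set.mem_inter_iff, D]
  have hmeas (b : V × V) : MeasurableSet[m'] {i | b ∈ (w i).darts.map Dart.toProd} := by
    rw [hsets]
    exact ((hmm' _ (hσm b)).inter (MeasurableSet.const _)).union
      ((MeasurableSet.const _).inter hD)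
  have hflow (b : V × V) (hb : G.Adj b.1 b.2) :
      @walkFlow V I m' ν G _ w b = @walkFlow V I m μ K od σ b := by
    unfold walkFlow
    rw [hν _ (hmeas b)]
    congr 2
    ext i
    simp only [hwd, Set.mem_sdiff, Set.mem_ofPred_eq, hb, and_true, D]
    exact ⟨fun hi => hi.1.resolve_right fun hi' => hi.2 hi'.2,
      fun hi => ⟨.inl hi, fun hD => h.not_adj_left_of_retract_eq (hσ i) hD hi hb⟩⟩
  refine ⟨w, hw, hmeas, fun i => ?_, hflow⟩
  exact (hwb i (c i) _ (hc i) (he i)).congr_flow fun b hb => (hflow b hb).symm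

lemma walkFlow_eq_of_adj_left (hG : StrongUniquenessProperty G) {I : Type}
    [MeasurableSpace I] (μ : Measure I) [IsFiniteMeasure μ] {od : I → V × V}
    {c : I → V × V → ℝ → ℝ} (hcm : ∀ i b, StrictMono (c i b))
    (hcc : ∀ i b, Continuous (c i b)) (hcn : ∀ i b x, 0 ≤ c i b x)
    {σ σ' : (i : I) → K.Walk (od i).1 (od i).2} (hσ : ∀ i, (σ i).IsPath)
    (hσ' : ∀ i, (σ' i).IsPath) (hσm : ∀ b, MeasurableSet {i | b ∈ (σ i).darts.map Dart.toProd})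
    (hσm' : ∀ b, MeasurableSet {i | b ∈ (σ' i).darts.map Dart.toProd})
    (he : IsWalkEquilibrium μ od c σ) (he' : IsWalkEquilibrium μ od c σ')
    {a : V × V} (ha : G.Adj a.1 a.2) :
    walkFlow μ od σ a = walkFlow μ od σ' a := by
  obtain ⟨m', ν, hmm', hD, hνfin, hν⟩ :=
    μ.exists_extension_sdiff {i | retract S v₀ (od i).1 = retract S v₀ (od i).2}
  obtain ⟨w, hw, hwm, hwe, hwf⟩ := h.exists_restricted_equilibrium ha hmm' hD hν hcn hσ hσm he
  obtain ⟨w', hw', hwm', hwe', hwf'⟩ :=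
    h.exists_restricted_equilibrium ha hmm' hD hν hcn hσ' hσm' he'
  rw [← hwf a ha, ← hwf' a ha]
  exact hG {ℓ | ℓ.1 ≠ ℓ.2} (fun _ hℓ => hℓ) I m' ν hνfin _
    (fun i => restrictPair_fst_ne_snd ha (od i)) _
    (fun i b => strictMono_restrictCost (hcm i b)) (fun i b => continuous_restrictCost (hcc i b))
    (fun i b _ => restrictCost_nonneg (hcn i b _)) w w' hw hw' hwm hwm' hwe hwe' a

end IsOneSum

/-- The 1-sum operation preserves the strong uniqueness property:
if `G` and `G'` have the strong uniqueness property, all edges of `G` lie in `S`, all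
edges of `G'` lie in `S'`, and `S ∩ S' = {v₀}` (the two graphs share exactly the
vertex `v₀`), then the union `G ⊔ G'` (the gluing of `G` and `G'` at `v₀`) has the
strong uniqueness property. -/
theorem oneSum_preserves_strongUniqueness {V : Type} (G G' : SimpleGraph V)
    (v₀ : V) (S S' : Set V)
    (hGS : ∀ {a b : V}, G.Adj a b → a ∈ S ∧ b ∈ S)
    (hGS' : ∀ {a b : V}, G'.Adj a b → a ∈ S' ∧ b ∈ S')
    (hinter : S ∩ S' = {v₀})
    (hG : StrongUniquenessProperty G) (hG' : StrongUniquenessProperty G') :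
    StrongUniquenessProperty (G ⊔ G') := by
  intro Hd _ I m μ _ od _ c hcm hcc hcn σ σ' hσ hσ' hσm hσm' he he' a
  have h : IsOneSum (G ⊔ G') G G' S S' v₀ := ⟨rfl, hGS, hGS', hinter⟩
  by_cases haG : G.Adj a.1 a.2
  · exact h.walkFlow_eq_of_adj_left hG μ hcm hcc hcn hσ hσ' hσm hσm' he he' haG
  by_cases haG' : G'.Adj a.1 a.2
  · exact h.symm.walkFlow_eq_of_adj_left hG' μ hcm hcc hcn hσ hσ' hσm hσm' he he' haG'
  have ha : ¬ (G ⊔ G').Adj a.1 a.2 := by simp [haG, haG']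
  rw [walkFlow_eq_zero_of_not_adj μ od σ ha, walkFlow_eq_zero_of_not_adj μ od σ' ha]
end
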